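/- For any superport network with m > p, the response matrix L is symmetric: L_i^j = L_j^i for all non-root boundary vertices i and j. -/

import Mathlib

open Finset BigOperators
open scoped Classical

namespace Superport

/-- A superport network: a finite connected simple graph on `Fin n` with conductances `c`
and `p` nonempty pairwise disjoint superports `A 0, …, A (p-1)` occupying the initial
segment of the vertices, ordered consecutively. -/
structure Network where
  n : ℕ
  p : ℕ
  graph : SimpleGraph (Fin n)
  c : Fin n → Fin n → ℝ
  A : Fin p → Finset (Fin n)
  p_pos : 0 < p
  connected : graph.Connected
  c_symm : ∀ k l, c k l = c l k
  c_pos : ∀ k l, graph.Adj k l → 0 < c k l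
  c_zero : ∀ k l, ¬ graph.Adj k l → c k l = 0
  A_nonempty : ∀ i, (A i).Nonempty
  A_disjoint : ∀ i j, i ≠ j → Disjoint (A i) (A j)
  A_ordered : ∀ i j u v, i < j → u ∈ A i → v ∈ A j → u < v
  boundary_initial : ∀ v : Fin n, (∃ i, v ∈ A i) ↔ (v : ℕ) < ∑ i, (A i).card

namespace Network

variable (N : Network)

/-- The set of boundary vertices. -/
def M : Finset (Fin N.n) := Finset.univ.biUnion N.A

/-- The number of boundary vertices. -/
def m : ℕ := N.M.card

theorem mem_M_iff {v : Fin N.n} : v ∈ N.M ↔ ∃ i, v ∈ N.A i := by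
  simp [M, Finset.mem_biUnion]

/-- The root of the superport of a boundary vertex `v` (the vertex of maximal number
in the superport containing `v`); for interior `v` we set `root v = v`. -/
noncomputable def root (v : Fin N.n) : Fin N.n :=
  if h : ∃ i, v ∈ N.A i then (N.A h.choose).max' ⟨v, h.choose_spec⟩ else v

/-- The index of the last superport. -/
def lastPort : Fin N.p := ⟨N.p - 1, Nat.sub_lt N.p_pos Nat.one_pos⟩

theorem M_nonempty : N.M.Nonempty := by
  obtain ⟨v, hv⟩ := N.A_nonempty N.lastPort
  exact ⟨v, N.mem_M_iff.mpr ⟨N.lastPort, hv⟩⟩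

theorem root_mem {v : Fin N.n} (hv : v ∈ N.M) : N.root v ∈ N.M := by
  have h : ∃ i, v ∈ N.A i := N.mem_M_iff.mp hv
  rw [root, dif_pos h]
  exact N.mem_M_iff.mpr ⟨h.choose, (N.A h.choose).max'_mem _⟩

theorem root_eq_self_of_max {v : Fin N.n} (hv : v ∈ N.M) (hmax : ∀ u ∈ N.M, u ≤ v) :
    N.root v = v := by
  have h : ∃ i, v ∈ N.A i := N.mem_M_iff.mp hv
  rw [root, dif_pos h]
  exact le_antisymm (hmax _ (N.mem_M_iff.mpr ⟨h.choose, (N.A h.choose).max'_mem _⟩))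
    (Finset.le_max' _ _ h.choose_spec)

/-- Axioms (C), (I), (P), (B) for voltages `U`, currents `I`, and prescribed voltage
differences `ΔU` (only the values of `ΔU` at non-root boundary vertices are relevant). -/
def Axioms (ΔU U : Fin N.n → ℝ) (I : Fin N.n → Fin N.n → ℝ) : Prop :=
  (∀ k l, I k l = N.c k l * (U k - U l)) ∧
  (∀ k, k ∉ N.M → ∑ l, I k l = 0) ∧
  (∀ i : Fin N.p, i ≠ N.lastPort → ∑ k ∈ N.A i, ∑ l, I k l = 0) ∧
  (∀ k, k ∈ N.M → N.root k ≠ k → U k - U (N.root k) = ΔU k)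

/-- The weight of a subgraph: the product of the conductances of its edges. -/
noncomputable def weight (H : SimpleGraph (Fin N.n)) : ℝ :=
  ∏ e ∈ (Set.toFinite H.edgeSet).toFinset, Sym2.lift ⟨N.c, N.c_symm⟩ e

/-- The number of edges of a subgraph. -/
noncomputable def edgeCount (H : SimpleGraph (Fin N.n)) : ℕ :=
  (Set.toFinite H.edgeSet).toFinset.card

/-- Two vertices lie in a common superport. -/
def samePort (u v : Fin N.n) : Prop := ∃ i, u ∈ N.A i ∧ v ∈ N.A i

/-- The `X`-equivalence: two boundary vertices not in `X` are equivalent iff they lie in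
the same superport; each interior vertex and each vertex of `X` forms a singleton class.
For `X = ∅` this is the equivalence relation `∼`. -/
def xSetoid (X : Set (Fin N.n)) : Setoid (Fin N.n) where
  r u v := u = v ∨ (u ∉ X ∧ v ∉ X ∧ N.samePort u v)
  iseqv := by
    constructor
    · intro u; exact Or.inl rfl
    · rintro u v (rfl | ⟨hu, hv, i, hui, hvi⟩)
      · exact Or.inl rfl
      · exact Or.inr ⟨hv, hu, i, hvi, hui⟩
    · rintro u v w huv hvw
      rcases huv with rfl | ⟨hu, hv, i, hui, hvi⟩
      · exact hvw
      rcases hvw with rfl | ⟨hv', hw, j, hvj, hwj⟩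
      · exact Or.inr ⟨hu, hv, i, hui, hvi⟩
      · have hij : i = j := by
          by_contra hij
          exact (Finset.disjoint_left.mp (N.A_disjoint i j hij) hvi) hvj
        exact Or.inr ⟨hu, hw, i, hui, hij ▸ hwj⟩

/-- The quotient of a graph `H` by an equivalence relation `s`: classes `a ≠ b` are
adjacent iff some representatives are adjacent in `H`. -/
def quotGraph (H : SimpleGraph (Fin N.n)) (s : Setoid (Fin N.n)) :
    SimpleGraph (Quotient s) where
  Adj a b := a ≠ b ∧ ∃ u v, H.Adj u v ∧ Quotient.mk s u = a ∧ Quotient.mk s v = b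
  symm := by
    constructor
    rintro a b ⟨hab, u, v, huv, hu, hv⟩
    exact ⟨hab.symm, v, u, huv.symm, hv, hu⟩
  loopless := by
    constructor
    rintro a ⟨hab, -⟩
    exact hab rfl

/-- A spanning forest of the network. -/
def IsSpanningForest (H : SimpleGraph (Fin N.n)) : Prop := H ≤ N.graph ∧ H.IsAcyclic

/-- A spanning forest becomes a spanning tree in the quotient by the `X`-equivalence
(in the multigraph sense): the quotient is connected and the number of edges of the
forest is one less than the number of equivalence classes.  For `X = {i}` this is
"valid relative to the vertex `i`"; for `X = ∅` this is "valid". -/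
def IsValidRel (X : Set (Fin N.n)) (H : SimpleGraph (Fin N.n)) : Prop :=
  N.IsSpanningForest H ∧ (N.quotGraph H (N.xSetoid X)).Connected ∧
    N.edgeCount H + 1 = Nat.card (Quotient (N.xSetoid X))

/-- A valid forest: a spanning forest which becomes a spanning tree in the quotient
by the equivalence `∼`. -/
def IsValidForest (H : SimpleGraph (Fin N.n)) : Prop := N.IsValidRel ∅ H

/-- The sign `sgn(H, i, j)` of a spanning forest `H` with respect to vertices `i, j`. -/
noncomputable def sgnIJ (H : SimpleGraph (Fin N.n)) (i j : Fin N.n) : ℝ :=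
  if i = j ∨ ¬ (N.quotGraph H (N.xSetoid {i, j})).Reachable
      (Quotient.mk (N.xSetoid {i, j}) i) (Quotient.mk (N.xSetoid {i, j}) j)
  then 1 else -1

/-- The type of non-root boundary vertices. -/
abbrev NonRoot := {v : Fin N.n // v ∈ N.M ∧ N.root v ≠ v}

/-- The type of boundary vertices. -/
abbrev Bdry := {v : Fin N.n // v ∈ N.M}

/-- `L` is the response matrix of the superport network: for any admissible voltages and
currents, the incoming currents at the non-root boundary vertices are obtained from the
prescribed voltage differences by multiplication by `L`. -/
def IsResponse (L : Matrix N.NonRoot N.NonRoot ℝ) : Prop :=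
  ∀ (ΔU U : Fin N.n → ℝ) (I : Fin N.n → Fin N.n → ℝ), N.Axioms ΔU U I →
    ∀ x : N.NonRoot, (∑ l, I x.1 l) = ∑ y : N.NonRoot, L x y * ΔU y.1

/-- `C` is the response matrix of the electrical network obtained by unifying all the
superports: same graph and conductances, boundary vertices `M`; axioms (C) and (I). -/
def IsElecResponse (C : Matrix N.Bdry N.Bdry ℝ) : Prop :=
  ∀ (Ub : N.Bdry → ℝ) (U : Fin N.n → ℝ) (I : Fin N.n → Fin N.n → ℝ),
    (∀ k l, I k l = N.c k l * (U k - U l)) →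
    (∀ k, k ∉ N.M → ∑ l, I k l = 0) →
    (∀ v : N.Bdry, U v.1 = Ub v) →
    ∀ v : N.Bdry, (∑ l, I v.1 l) = ∑ u : N.Bdry, C v u * Ub u

/-- The sum of the weights of all valid forests. -/
noncomputable def validForestSum : ℝ :=
  ∑ H ∈ Finset.univ.filter (fun H => N.IsValidForest H), N.weight H

end Network
end Superport

/-!
Green's identity: for any two voltage vectors `U`, `V`,
`∑ k, V k * ∑ l, c k l * (U k - U l)` is half the symmetric energy form
`∑ k l, c k l * (U k - U l) * (V k - V l)`, hence symmetric in `U` and `V`.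
For two solutions of the axioms, the interior vertices contribute nothing, and on a superport
only voltage differences to the root matter because the net current into the superport
vanishes; so Green's identity becomes `⟪ΔU', L ΔU⟫ = ⟪ΔU, L ΔU'⟫`.
Testing with unit vectors gives the symmetry of `L`, once one knows that the axioms have a
solution for every `ΔU`: this is the Dirichlet problem on the voltages constant on each
superport, solvable because the energy form is symmetric and its kernel consists of constants,
on which the right-hand side vanishes.
-/

theorem LinearMap.IsSymm.range_eq_dualAnnihilator_ker {K E : Type*} [Field K]
    [AddCommGroup E] [Module K E] [FiniteDimensional K E] {B : E →ₗ[K] E →ₗ[K] K}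
    (hB : B.IsSymm) : LinearMap.range B = (LinearMap.ker B).dualAnnihilator := by
  have hdual : B.dualMap ∘ₗ (Module.evalEquiv K E).toLinearMap = B := by
    ext u v
    simpa using (hB.eq u v).symm
  rw [← LinearMap.range_dualMap_eq_dualAnnihilator_ker]
  conv_lhs => rw [← hdual]
  exact LinearMap.range_comp_of_range_eq_top _ (LinearEquiv.range _)

theorem SimpleGraph.Reachable.apply_eq_of_forall_adj {V α : Type*} {G : SimpleGraph V}
    {f : V → α} (hf : ∀ u v, G.Adj u v → f u = f v) {u v : V} (h : G.Reachable u v) :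
    f u = f v := by
  obtain ⟨w⟩ := h
  induction w with
  | nil => rfl
  | cons hadj _ ih => exact (hf _ _ hadj).trans ih

namespace Superport

namespace Network

variable (N : Network)

theorem c_nonneg (k l : Fin N.n) : 0 ≤ N.c k l := by
  by_cases h : N.graph.Adj k l
  · exact (N.c_pos k l h).le
  · rw [N.c_zero k l h]

variable {N}

theorem eq_of_mem_A {v : Fin N.n} {i j : Fin N.p} (hi : v ∈ N.A i) (hj : v ∈ N.A j) :
    i = j := by
  by_contra h
  exact Finset.disjoint_left.mp (N.A_disjoint i j h) hi hj

theorem sum_M_eq_sum_A {β : Type*} [AddCommMonoid β] (f : Fin N.n → β) :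
    ∑ k ∈ N.M, f k = ∑ i, ∑ k ∈ N.A i, f k :=
  Finset.sum_biUnion fun a _ b _ hab => N.A_disjoint a b hab

theorem root_eq_max' {v : Fin N.n} {i : Fin N.p} (hv : v ∈ N.A i) :
    N.root v = (N.A i).max' (N.A_nonempty i) := by
  have h : ∃ j, v ∈ N.A j := ⟨i, hv⟩
  rw [root, dif_pos h]
  obtain rfl := eq_of_mem_A h.choose_spec hv
  rfl

theorem root_mem_A {v : Fin N.n} {i : Fin N.p} (hv : v ∈ N.A i) : N.root v ∈ N.A i := by
  rw [root_eq_max' hv]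
  exact Finset.max'_mem _ _

theorem root_root {v : Fin N.n} (hv : v ∈ N.M) : N.root (N.root v) = N.root v := by
  obtain ⟨i, hi⟩ := N.mem_M_iff.mp hv
  rw [root_eq_max' (root_mem_A hi), root_eq_max' hi]

theorem root_eq_self_of_notMem_M {v : Fin N.n} (hv : v ∉ N.M) : N.root v = v :=
  dif_neg (mt N.mem_M_iff.mpr hv)

theorem mem_M_of_root_ne {v : Fin N.n} (hv : N.root v ≠ v) : v ∈ N.M := by
  by_contra hM
  exact hv (root_eq_self_of_notMem_M hM)

theorem root_mem_A_iff {v : Fin N.n} {i : Fin N.p} : N.root v ∈ N.A i ↔ v ∈ N.A i := by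
  by_cases hv : v ∈ N.M
  · obtain ⟨j, hj⟩ := N.mem_M_iff.mp hv
    exact ⟨fun h => eq_of_mem_A (root_mem_A hj) h ▸ hj, root_mem_A⟩
  · rw [root_eq_self_of_notMem_M hv]

variable (N)

/-- The energy form; `N.energy U U` is twice the power dissipated under the voltages `U`. -/
noncomputable def energy : (Fin N.n → ℝ) →ₗ[ℝ] (Fin N.n → ℝ) →ₗ[ℝ] ℝ :=
  LinearMap.mk₂ ℝ (fun U V => ∑ k, ∑ l, N.c k l * (U k - U l) * (V k - V l))
    (fun U U' V => by
      simp only [Pi.add_apply, ← Finset.sum_add_distrib]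
      exact Finset.sum_congr rfl fun _ _ => Finset.sum_congr rfl fun _ _ => by ring)
    (fun a U V => by
      simp only [Pi.smul_apply, smul_eq_mul, Finset.mul_sum]
      exact Finset.sum_congr rfl fun _ _ => Finset.sum_congr rfl fun _ _ => by ring)
    (fun U V V' => by
      simp only [Pi.add_apply, ← Finset.sum_add_distrib]
      exact Finset.sum_congr rfl fun _ _ => Finset.sum_congr rfl fun _ _ => by ring)
    (fun a U V => by
      simp only [Pi.smul_apply, smul_eq_mul, Finset.mul_sum]
      exact Finset.sum_congr rfl fun _ _ => Finset.sum_congr rfl fun _ _ => by ring)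

theorem energy_apply (U V : Fin N.n → ℝ) :
    N.energy U V = ∑ k, ∑ l, N.c k l * (U k - U l) * (V k - V l) := rfl

theorem energy_isSymm : N.energy.IsSymm := by
  refine ⟨fun U V => ?_⟩
  simp only [energy_apply, RingHom.id_apply]
  exact Finset.sum_congr rfl fun _ _ => Finset.sum_congr rfl fun _ _ => by ring

theorem energy_eq_two_mul (U V : Fin N.n → ℝ) :
    N.energy U V = 2 * ∑ k, V k * ∑ l, N.c k l * (U k - U l) := by
  have hswap : ∑ k, ∑ l, N.c k l * (U k - U l) * V l
      = -∑ k, ∑ l, N.c k l * (U k - U l) * V k := by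
    rw [Finset.sum_comm, ← Finset.sum_neg_distrib]
    refine Finset.sum_congr rfl fun k _ => ?_
    rw [← Finset.sum_neg_distrib]
    exact Finset.sum_congr rfl fun l _ => by rw [N.c_symm l k]; ring
  calc N.energy U V
      = ∑ k, ∑ l, N.c k l * (U k - U l) * V k - ∑ k, ∑ l, N.c k l * (U k - U l) * V l := by
        simp only [energy_apply, ← Finset.sum_sub_distrib, mul_sub]
    _ = 2 * ∑ k, V k * ∑ l, N.c k l * (U k - U l) := by
        rw [hswap, sub_neg_eq_add, ← two_mul]
        congr 1
        refine Finset.sum_congr rfl fun k _ => ?_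
        rw [Finset.mul_sum]
        exact Finset.sum_congr rfl fun l _ => by ring

theorem green (U V : Fin N.n → ℝ) :
    ∑ k, V k * ∑ l, N.c k l * (U k - U l) = ∑ k, U k * ∑ l, N.c k l * (V k - V l) := by
  have h := N.energy_isSymm.eq U V
  simp only [energy_eq_two_mul, RingHom.id_apply] at h
  linarith

theorem energy_eq_zero_of_const {U V : Fin N.n → ℝ} (hV : ∀ k l, V k = V l) :
    N.energy U V = 0 := by
  rw [energy_apply]
  exact Finset.sum_eq_zero fun k _ => Finset.sum_eq_zero fun l _ => by rw [hV k l]; ring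

theorem const_of_energy_self_eq_zero {V : Fin N.n → ℝ} (h : N.energy V V = 0) (k l : Fin N.n) :
    V k = V l := by
  have hterm_nonneg : ∀ k l, 0 ≤ N.c k l * (V k - V l) * (V k - V l) := fun k l => by
    rw [mul_assoc]; exact mul_nonneg (N.c_nonneg k l) (mul_self_nonneg _)
  have hterm_zero : ∀ k l, N.c k l * (V k - V l) * (V k - V l) = 0 := by
    rw [energy_apply, Finset.sum_eq_zero_iff_of_nonneg fun k _ =>
      Finset.sum_nonneg fun l _ => hterm_nonneg k l] at h
    exact fun k l => (Finset.sum_eq_zero_iff_of_nonneg fun l _ => hterm_nonneg k l).mp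
      (h k (Finset.mem_univ _)) l (Finset.mem_univ _)
  refine (N.connected.preconnected k l).apply_eq_of_forall_adj fun u v huv => ?_
  have := hterm_zero u v
  simp only [mul_eq_zero, (N.c_pos u v huv).ne', false_or, or_self, sub_eq_zero] at this
  exact this

def portConst : Submodule ℝ (Fin N.n → ℝ) where
  carrier := {V | ∀ k, V (N.root k) = V k}
  add_mem' hV hW k := by simp only [Pi.add_apply, hV k, hW k]
  zero_mem' _ := rfl
  smul_mem' a V hV k := by simp only [Pi.smul_apply, hV k]

theorem single_mem_portConst {j : Fin N.n} (hj : j ∉ N.M) :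
    Pi.single j (1 : ℝ) ∈ N.portConst := by
  intro k
  by_cases hk : k ∈ N.M
  · rw [Pi.single_eq_of_ne (ne_of_mem_of_not_mem (N.root_mem hk) hj),
      Pi.single_eq_of_ne (ne_of_mem_of_not_mem hk hj)]
  · rw [root_eq_self_of_notMem_M hk]

theorem indicator_A_mem_portConst (i : Fin N.p) :
    (fun k => if k ∈ N.A i then (1 : ℝ) else 0) ∈ N.portConst := by
  intro k
  simp only [root_mem_A_iff]

theorem exists_mem_portConst_energy_add_eq_zero (U₀ : Fin N.n → ℝ) :
    ∃ u ∈ N.portConst, ∀ w ∈ N.portConst, N.energy (U₀ + u) w = 0 := by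
  set B := N.energy.domRestrict₁₂ N.portConst N.portConst
  set f : Module.Dual ℝ N.portConst := -(N.energy U₀).domRestrict N.portConst
  have hf : f ∈ (LinearMap.ker B).dualAnnihilator := by
    refine (Submodule.mem_dualAnnihilator f).mpr fun v hv => ?_
    have hvv : N.energy v v = 0 := LinearMap.congr_fun (LinearMap.mem_ker.mp hv) v
    simp [f, N.energy_eq_zero_of_const (N.const_of_energy_self_eq_zero hvv)]
  rw [← (N.energy_isSymm.domRestrict _).range_eq_dualAnnihilator_ker] at hf
  obtain ⟨u, hu⟩ := hf
  refine ⟨u, u.2, fun w hw => ?_⟩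
  have huw := LinearMap.congr_fun hu ⟨w, hw⟩
  simp only [f, LinearMap.domRestrict₁₂_apply, LinearMap.neg_apply,
    LinearMap.domRestrict_apply] at huw
  rw [map_add, LinearMap.add_apply, huw, add_neg_cancel]

theorem axioms_of_energy_eq_zero {ΔU U : Fin N.n → ℝ}
    (hB : ∀ k, N.root k ≠ k → U k - U (N.root k) = ΔU k)
    (hU : ∀ w ∈ N.portConst, N.energy U w = 0) :
    N.Axioms ΔU U (fun k l => N.c k l * (U k - U l)) := by
  have hweighted : ∀ w ∈ N.portConst, ∑ k, w k * ∑ l, N.c k l * (U k - U l) = 0 := by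
    intro w hw
    have := hU w hw
    rw [energy_eq_two_mul] at this
    linarith
  refine ⟨fun _ _ => rfl, fun k hk => ?_, fun i _ => ?_, fun k _ hk => hB k hk⟩
  · simpa [Pi.single_apply] using hweighted _ (N.single_mem_portConst hk)
  · simpa [Finset.sum_ite_mem] using hweighted _ (N.indicator_A_mem_portConst i)

theorem exists_axioms (ΔU : Fin N.n → ℝ) :
    ∃ U, N.Axioms ΔU U (fun k l => N.c k l * (U k - U l)) := by
  obtain ⟨u, hu, hU⟩ :=
    N.exists_mem_portConst_energy_add_eq_zero fun k => if N.root k ≠ k then ΔU k else 0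
  refine ⟨_, N.axioms_of_energy_eq_zero (fun k hk => ?_) hU⟩
  simp [hk, root_root (mem_M_of_root_ne hk), hu k]

namespace Axioms

variable {N} {ΔU U ΔU' U' : Fin N.n → ℝ} {I I' : Fin N.n → Fin N.n → ℝ}

theorem sum_current_eq_zero (h : N.Axioms ΔU U I) : ∑ k, ∑ l, I k l = 0 := by
  have hanti : ∑ k, ∑ l, I k l = -∑ k, ∑ l, I k l := by
    conv_lhs => rw [Finset.sum_comm]
    rw [← Finset.sum_neg_distrib]
    refine Finset.sum_congr rfl fun k _ => ?_
    rw [← Finset.sum_neg_distrib]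
    exact Finset.sum_congr rfl fun l _ => by rw [h.1 l k, h.1 k l, N.c_symm l k]; ring
  linarith

theorem sum_A_current_eq_zero (h : N.Axioms ΔU U I) (i : Fin N.p) :
    ∑ k ∈ N.A i, ∑ l, I k l = 0 := by
  have htotal := h.sum_current_eq_zero
  obtain ⟨-, hI, hP, -⟩ := h
  by_cases hi : i = N.lastPort
  · have hM : ∑ j, ∑ k ∈ N.A j, ∑ l, I k l = 0 := by
      rw [← sum_M_eq_sum_A, ← htotal]
      exact Finset.sum_subset (Finset.subset_univ _) fun k _ hk => hI k hk
    rwa [Finset.sum_eq_single_of_mem i (Finset.mem_univ _) fun j _ hj => hP j (hi ▸ hj)] at hM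
  · exact hP i hi

theorem sum_mul_current_eq (h : N.Axioms ΔU U I) (h' : N.Axioms ΔU' U' I') :
    ∑ k, U' k * ∑ l, I k l = ∑ x : N.NonRoot, ΔU' x.1 * ∑ l, I x.1 l := by
  have hroots : ∑ k, U' (N.root k) * ∑ l, I k l = 0 := by
    rw [← Finset.sum_subset (Finset.subset_univ N.M) fun k _ hk => by rw [h.2.1 k hk, mul_zero],
      sum_M_eq_sum_A]
    refine Finset.sum_eq_zero fun i _ => ?_
    rw [Finset.sum_congr rfl fun k hk => by rw [root_eq_max' hk], ← Finset.mul_sum,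
      h.sum_A_current_eq_zero i, mul_zero]
  have hdiffs : ∑ k, (U' k - U' (N.root k)) * ∑ l, I k l
      = ∑ x : N.NonRoot, ΔU' x.1 * ∑ l, I x.1 l := by
    rw [← Finset.sum_subtype (Finset.univ.filter fun k => k ∈ N.M ∧ N.root k ≠ k) (by simp)
      fun k => ΔU' k * ∑ l, I k l, Finset.sum_filter]
    refine Finset.sum_congr rfl fun k _ => ?_
    split_ifs with hk
    · rw [h'.2.2.2 k hk.1 hk.2]
    · have hroot_k : N.root k = k := by
        by_contra hr
        exact hk ⟨mem_M_of_root_ne hr, hr⟩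
      rw [hroot_k, sub_self, zero_mul]
  calc ∑ k, U' k * ∑ l, I k l
      = ∑ k, (U' k - U' (N.root k)) * ∑ l, I k l + ∑ k, U' (N.root k) * ∑ l, I k l := by
        rw [← Finset.sum_add_distrib]
        exact Finset.sum_congr rfl fun k _ => by ring
    _ = ∑ x : N.NonRoot, ΔU' x.1 * ∑ l, I x.1 l := by rw [hdiffs, hroots, add_zero]

theorem reciprocity (h : N.Axioms ΔU U I) (h' : N.Axioms ΔU' U' I') :
    ∑ x : N.NonRoot, ΔU' x.1 * ∑ l, I x.1 l
      = ∑ x : N.NonRoot, ΔU x.1 * ∑ l, I' x.1 l := by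
  calc ∑ x : N.NonRoot, ΔU' x.1 * ∑ l, I x.1 l = ∑ k, U' k * ∑ l, I k l :=
        (h.sum_mul_current_eq h').symm
    _ = ∑ k, U k * ∑ l, I' k l := by
        simp only [h.1, h'.1]
        exact N.green U U'
    _ = ∑ x : N.NonRoot, ΔU x.1 * ∑ l, I' x.1 l := h'.sum_mul_current_eq h

end Axioms

end Network

theorem response_symmetric_general (N : Network)
    (L : Matrix N.NonRoot N.NonRoot ℝ) (hL : N.IsResponse L) :
    ∀ i j : N.NonRoot, L i j = L j i := by
  intro i j
  obtain ⟨U, hU⟩ := N.exists_axioms (Pi.single i.1 1)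
  obtain ⟨U', hU'⟩ := N.exists_axioms (Pi.single j.1 1)
  have h := hU.reciprocity hU'
  simp only [hL _ _ _ hU, hL _ _ _ hU', Pi.single_apply, Subtype.val_inj, ite_mul, one_mul,
    zero_mul, mul_ite, mul_one, mul_zero, Finset.sum_ite_eq', Finset.mem_univ, if_true] at h
  exact h.symm

/-- **Symmetry of the response matrix of a superport network.** -/
theorem response_symmetric (N : Network) (hmp : N.p < N.m)
    (L : Matrix N.NonRoot N.NonRoot ℝ) (hL : N.IsResponse L) :
    ∀ i j : N.NonRoot, L i j = L j i :=
  response_symmetric_general N L hL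

end Superport
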